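/- Vanishing of the effective second-order error term: Let q: ℝ^d → ℝ be positive and four times continuously differentiable, let f = log q, and let g: ℝ^d → ℝ be continuously differentiable and satisfy the second-order denoising equation q∇g = ∇²f ∇q + (Δq)∇f − ∇Δq on ℝ^d. Then for every y ∈ ℝ^d the following identity holds: Δ²q − ( ⟨∇q, ∇g⟩ + ⟨∇²q, ∇f ⊗ ∇f⟩ ) − 2⟨∇q, ∇f⟩Δf − q·( Δg + (Δf)² − ⟨∇²f, ∇²f⟩ ) − 2·( Δ²q − ⟨∇Δq, ∇f⟩ − Δq·Δf ) = 0, where all quantities are evaluated at y. -/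

import Mathlib

open MeasureTheory Real

noncomputable section

/-- Partial derivative of `h` in coordinate `i`. -/
def pd {d : ℕ} (i : Fin d) (h : (Fin d → ℝ) → ℝ) (y : Fin d → ℝ) : ℝ :=
  fderiv ℝ h y (Pi.single i 1)

/-- Iterated partial derivative along a list of coordinate indices. -/
def pdl {d : ℕ} (l : List (Fin d)) (h : (Fin d → ℝ) → ℝ) : (Fin d → ℝ) → ℝ :=
  l.foldr (fun i acc => pd i acc) h

/-- Gradient vector. -/
def grad {d : ℕ} (h : (Fin d → ℝ) → ℝ) (y : Fin d → ℝ) : Fin d → ℝ :=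
  fun i => pd i h y

/-- Hessian matrix. -/
def hess {d : ℕ} (h : (Fin d → ℝ) → ℝ) (y : Fin d → ℝ) : Matrix (Fin d) (Fin d) ℝ :=
  Matrix.of fun i j => pd i (pd j h) y

/-- Laplacian. -/
def lap {d : ℕ} (h : (Fin d → ℝ) → ℝ) (y : Fin d → ℝ) : ℝ :=
  ∑ i, pd i (pd i h) y

/-- Euclidean norm on `Fin d → ℝ`. -/
def eunorm {d : ℕ} (v : Fin d → ℝ) : ℝ :=
  Real.sqrt (∑ i, v i ^ 2)

/-- Frobenius norm of a matrix. -/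
def fnorm {d : ℕ} (A : Matrix (Fin d) (Fin d) ℝ) : ℝ :=
  Real.sqrt (∑ i, ∑ j, A i j ^ 2)

/-- Sup (ℓ∞) norm on `Fin d → ℝ`. -/
def supnorm {d : ℕ} (v : Fin d → ℝ) : ℝ :=
  ⨆ i, |v i|

/-- Smoothness assumption `S(k)`: `p` is `C^k` and all of its iterated partial
derivatives of order at most `k` are uniformly bounded. -/
def SmoothS {d : ℕ} (k : ℕ) (p : (Fin d → ℝ) → ℝ) : Prop :=
  ContDiff ℝ k p ∧
    ∀ l : List (Fin d), l.length ≤ k → ∃ M : ℝ, ∀ x, |pdl l p x| ≤ M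

/-- The class `M²(ℝ^d)` of 2-smooth test functions. -/
def TestM2 {d : ℕ} (m : (Fin d → ℝ) → ℝ) : Prop :=
  ContDiff ℝ 2 m ∧ (∃ M : ℝ, ∀ y i j, |pd i (pd j m) y| ≤ M) ∧
    Integrable m ∧ Integrable (fun y => supnorm (grad m y))

/-- The class `M³(ℝ^d)` of 3-smooth test functions. -/
def TestM3 {d : ℕ} (m : (Fin d → ℝ) → ℝ) : Prop :=
  ContDiff ℝ 3 m ∧ (∃ M : ℝ, ∀ y i j k, |pd i (pd j (pd k m)) y| ≤ M) ∧
    Integrable m ∧ Integrable (fun y => supnorm (grad m y))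

/-! Since `∇q = q ∇f`, every derivative of `q` is `q` times a polynomial in the derivatives of `f`;
for instance `Δq = q (|∇f|² + Δf)`. Substituted into the denoising equation, together with
`∇|∇f|² = 2 ∇²f ∇f`, this turns the equation into `∇(g + |∇f|²/2 + Δf) = 0`, and as the
Laplacian only sees the gradient, `Δg = -(Δ|∇f|²/2 + Δ²f)`. After all substitutions the residual
is `q (⟨∇f, ∇Δf⟩ + |∇²f|² - Δ|∇f|²/2)`, which vanishes by Bochner's identity
`Δ|∇f|² = 2|∇²f|² + 2⟨∇f, ∇Δf⟩`. -/

open Finset Matrix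

def gradNormSq {d : ℕ} (u : (Fin d → ℝ) → ℝ) (x : Fin d → ℝ) : ℝ :=
  grad u x ⬝ᵥ grad u x

section Calculus

variable {d : ℕ} {u v : (Fin d → ℝ) → ℝ} {x : Fin d → ℝ} {i : Fin d}

lemma pd_add (hu : DifferentiableAt ℝ u x) (hv : DifferentiableAt ℝ v x) :
    pd i (fun y => u y + v y) x = pd i u x + pd i v x := by
  simp [pd, fderiv_fun_add hu hv]

lemma pd_neg : pd i (fun y => -u y) x = -pd i u x := by
  simp [pd, fderiv_fun_neg]

lemma pd_div_const (hu : DifferentiableAt ℝ u x) (c : ℝ) :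
    pd i (fun y => u y / c) x = pd i u x / c := by
  simp [pd, div_eq_mul_inv, fderiv_mul_const hu, mul_comm]

lemma pd_mul (hu : DifferentiableAt ℝ u x) (hv : DifferentiableAt ℝ v x) :
    pd i (fun y => u y * v y) x = pd i u x * v x + u x * pd i v x := by
  simp only [pd, fderiv_fun_mul hu hv, _root_.add_apply, _root_.smul_apply, smul_eq_mul]
  ring

lemma pd_sum {ι : Type*} {s : Finset ι} {w : ι → (Fin d → ℝ) → ℝ}
    (hw : ∀ k ∈ s, DifferentiableAt ℝ (w k) x) :
    pd i (fun y => ∑ k ∈ s, w k y) x = ∑ k ∈ s, pd i (w k) x := by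
  simp [pd, fderiv_fun_sum hw]

lemma pd_log (hu : DifferentiableAt ℝ u x) (hx : u x ≠ 0) :
    pd i (fun y => Real.log (u y)) x = pd i u x / u x := by
  simp [pd, (hu.hasFDerivAt.log hx).fderiv, div_eq_inv_mul]

lemma ContDiff.contDiff_pd {m n : WithTop ℕ∞} (hu : ContDiff ℝ n u) (hmn : m + 1 ≤ n)
    (i : Fin d) : ContDiff ℝ m (pd i u) :=
  (hu.fderiv_right hmn).clm_apply contDiff_const

lemma ContDiff.differentiable_pd (hu : ContDiff ℝ 2 u) (i : Fin d) :
    Differentiable ℝ (pd i u) :=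
  (hu.contDiff_pd (m := 1) (by norm_num) i).differentiable one_ne_zero

lemma ContDiff.lap {m n : WithTop ℕ∞} (hu : ContDiff ℝ n u) (hmn : m + 2 ≤ n) :
    ContDiff ℝ m (lap u) := by
  have hmn' : m + 1 + 1 ≤ n := by rwa [add_assoc, one_add_one_eq_two]
  exact ContDiff.sum fun i _ => (hu.contDiff_pd hmn' i).contDiff_pd le_rfl i

lemma ContDiff.gradNormSq {m n : WithTop ℕ∞} (hu : ContDiff ℝ n u) (hmn : m + 1 ≤ n) :
    ContDiff ℝ m (gradNormSq u) :=
  show ContDiff ℝ m fun x => ∑ i, pd i u x * pd i u x from ContDiff.sum fun i _ => (hu.contDiff_pd hmn i).mul (hu.contDiff_pd hmn i)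

lemma pd_comm (hu : ContDiff ℝ 2 u) (i j : Fin d) : pd i (pd j u) = pd j (pd i u) := by
  funext x
  have hd : DifferentiableAt ℝ (fderiv ℝ u) x :=
    (hu.fderiv_right (m := 1) (by norm_num)).differentiable one_ne_zero x
  have second : ∀ a b : Fin d,
      pd a (pd b u) x = fderiv ℝ (fderiv ℝ u) x (Pi.single a 1) (Pi.single b 1) := by
    intro a b
    change fderiv ℝ (fun y => fderiv ℝ u y (Pi.single b 1)) x (Pi.single a 1) = _
    simp [fderiv_clm_apply hd (differentiableAt_const _)]
  rw [second, second, hu.contDiffAt.isSymmSndFDerivAt (by norm_num)]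

lemma pd_lap (hu : ContDiff ℝ 3 u) (k : Fin d) : pd k (lap u) x = lap (pd k u) x := by
  change pd k (fun y => ∑ i, pd i (pd i u) y) x = _
  rw [pd_sum fun i _ => (hu.contDiff_pd (m := 2) (by norm_num) i).differentiable_pd i x]
  refine sum_congr rfl fun i _ => ?_
  rw [pd_comm (hu.contDiff_pd (by norm_num) i), pd_comm (hu.of_le (by norm_num)) k i]

lemma grad_add (hu : DifferentiableAt ℝ u x) (hv : DifferentiableAt ℝ v x) :
    grad (fun y => u y + v y) x = grad u x + grad v x :=
  funext fun _ => pd_add hu hv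

lemma grad_neg : grad (fun y => -u y) x = -grad u x :=
  funext fun _ => pd_neg

lemma grad_div_const (hu : DifferentiableAt ℝ u x) (c : ℝ) :
    grad (fun y => u y / c) x = c⁻¹ • grad u x :=
  funext fun _ => (pd_div_const hu c).trans (div_eq_inv_mul _ _)

lemma grad_mul (hu : DifferentiableAt ℝ u x) (hv : DifferentiableAt ℝ v x) :
    grad (fun y => u y * v y) x = v x • grad u x + u x • grad v x :=
  funext fun _ => (pd_mul hu hv).trans (by simp only [grad, Pi.add_apply, Pi.smul_apply, smul_eq_mul]; ring)

lemma lap_congr (h : ∀ y, grad u y = grad v y) : lap u x = lap v x := by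
  have hpd : ∀ i, pd i u = pd i v := fun i => funext fun y => congrFun (h y) i
  simp only [lap, hpd]

lemma lap_add (hu : ContDiff ℝ 2 u) (hv : ContDiff ℝ 2 v) :
    lap (fun y => u y + v y) x = lap u x + lap v x := by
  simp only [lap, ← sum_add_distrib]
  refine sum_congr rfl fun i _ => ?_
  have hpd : pd i (fun y => u y + v y) = fun y => pd i u y + pd i v y :=
    funext fun y => pd_add (hu.differentiable two_ne_zero y) (hv.differentiable two_ne_zero y)
  rw [hpd, pd_add (hu.differentiable_pd i x) (hv.differentiable_pd i x)]

lemma lap_neg : lap (fun y => -u y) x = -lap u x := by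
  simp only [lap, ← sum_neg_distrib]
  refine sum_congr rfl fun i _ => ?_
  rw [show pd i (fun y => -u y) = fun y => -pd i u y from funext fun _ => pd_neg, pd_neg]

lemma lap_div_const (hu : ContDiff ℝ 2 u) (c : ℝ) :
    lap (fun y => u y / c) x = lap u x / c := by
  simp only [lap, sum_div]
  refine sum_congr rfl fun i _ => ?_
  have hpd : pd i (fun y => u y / c) = fun y => pd i u y / c :=
    funext fun y => pd_div_const (hu.differentiable two_ne_zero y) c
  rw [hpd, pd_div_const (hu.differentiable_pd i x)]

lemma lap_sum {ι : Type*} {s : Finset ι} {w : ι → (Fin d → ℝ) → ℝ}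
    (hw : ∀ k ∈ s, ContDiff ℝ 2 (w k)) :
    lap (fun y => ∑ k ∈ s, w k y) x = ∑ k ∈ s, lap (w k) x := by
  simp only [lap]
  rw [sum_comm]
  refine sum_congr rfl fun i _ => ?_
  have hpd : pd i (fun y => ∑ k ∈ s, w k y) = fun y => ∑ k ∈ s, pd i (w k) y :=
    funext fun y => pd_sum fun k hk => (hw k hk).differentiable two_ne_zero y
  rw [hpd, pd_sum fun k hk => (hw k hk).differentiable_pd i x]

lemma lap_mul (hu : ContDiff ℝ 2 u) (hv : ContDiff ℝ 2 v) :
    lap (fun y => u y * v y) x = lap u x * v x + 2 * (grad u x ⬝ᵥ grad v x) + u x * lap v x := by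
  have hu1 := hu.differentiable two_ne_zero
  have hv1 := hv.differentiable two_ne_zero
  simp only [lap, dotProduct, grad, sum_mul, mul_sum, ← sum_add_distrib]
  refine sum_congr rfl fun i _ => ?_
  have hpd : pd i (fun y => u y * v y) = fun y => pd i u y * v y + u y * pd i v y :=
    funext fun y => pd_mul (hu1 y) (hv1 y)
  have hu2 := hu.differentiable_pd i x
  have hv2 := hv.differentiable_pd i x
  rw [hpd, pd_add (hu2.fun_mul (hv1 x)) ((hu1 x).fun_mul hv2), pd_mul hu2 (hv1 x),
    pd_mul (hu1 x) hv2]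
  ring

lemma grad_gradNormSq (hu : ContDiff ℝ 2 u) :
    grad (gradNormSq u) x = (2 : ℝ) • (hess u x *ᵥ grad u x) := by
  funext i
  change pd i (fun y => ∑ j, pd j u y * pd j u y) x = 2 * ∑ j, pd i (pd j u) x * pd j u x
  rw [pd_sum fun j _ => (hu.differentiable_pd j x).fun_mul (hu.differentiable_pd j x), mul_sum]
  refine sum_congr rfl fun j _ => ?_
  rw [pd_mul (hu.differentiable_pd j x) (hu.differentiable_pd j x)]
  ring

lemma lap_gradNormSq (hu : ContDiff ℝ 3 u) :
    lap (gradNormSq u) x =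
      2 * ∑ i, ∑ j, hess u x i j * hess u x i j + 2 * (grad u x ⬝ᵥ grad (lap u) x) := by
  have hpdu : ∀ j, ContDiff ℝ 2 (pd j u) := hu.contDiff_pd (by norm_num)
  have hterm : ∀ j, lap (fun y => pd j u y * pd j u y) x =
      2 * ∑ i, hess u x i j * hess u x i j + 2 * (pd j u x * pd j (lap u) x) := by
    intro j
    rw [lap_mul (hpdu j) (hpdu j), ← pd_lap hu]
    simp only [dotProduct, grad, hess, of_apply]
    ring
  change lap (fun y => ∑ j, pd j u y * pd j u y) x = _
  rw [lap_sum fun j _ => (hpdu j).mul (hpdu j)]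
  simp only [hterm, sum_add_distrib, ← mul_sum]
  rw [sum_comm]
  rfl

end Calculus

lemma sum_sum_mul_mul_eq_dotProduct_mulVec {n R : Type*} [Fintype n] [CommSemiring R]
    (A : Matrix n n R) (v w : n → R) : ∑ i, ∑ j, A i j * (v i * w j) = v ⬝ᵥ (A *ᵥ w) := by
  simp only [dotProduct, mulVec, mul_sum]
  exact sum_congr rfl fun i _ => sum_congr rfl fun j _ => by ring

lemma grad_eq_smul_grad_log {d : ℕ} {q : (Fin d → ℝ) → ℝ} {x : Fin d → ℝ}
    (hq : DifferentiableAt ℝ q x) (hx : q x ≠ 0) :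
    grad q x = q x • grad (fun y => Real.log (q y)) x :=
  funext fun _ => by simp [grad, pd_log hq hx, mul_div_cancel₀ _ hx]

section LogarithmicGradient

variable {d : ℕ} {q f : (Fin d → ℝ) → ℝ} (hqf : ∀ x, grad q x = q x • grad f x)
include hqf

lemma hess_eq_of_grad_eq_smul (hq : Differentiable ℝ q) (hf : ContDiff ℝ 2 f) (x : Fin d → ℝ) :
    hess q x = q x • (vecMulVec (grad f x) (grad f x) + hess f x) := by
  ext i j
  have hpd : pd j q = fun y => q y * pd j f y := funext fun y => congrFun (hqf y) j
  simp only [hess, of_apply, Matrix.smul_apply, Matrix.add_apply, vecMulVec_apply, smul_eq_mul]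
  rw [hpd, pd_mul (hq x) (hf.differentiable_pd j x),
    show pd i q x = q x * pd i f x from congrFun (hqf x) i]
  simp only [grad]
  ring

lemma lap_eq_of_grad_eq_smul (hq : Differentiable ℝ q) (hf : ContDiff ℝ 2 f) (x : Fin d → ℝ) :
    lap q x = q x * (gradNormSq f x + lap f x) := by
  rw [show lap q x = (hess q x).trace from rfl, hess_eq_of_grad_eq_smul hqf hq hf, trace_smul,
    trace_add, trace_vecMulVec]
  rfl

lemma grad_lap_eq_of_grad_eq_smul (hq : Differentiable ℝ q) (hf : ContDiff ℝ 3 f)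
    (x : Fin d → ℝ) :
    grad (lap q) x = q x • ((gradNormSq f x + lap f x) • grad f x +
      (2 : ℝ) • (hess f x *ᵥ grad f x) + grad (lap f) x) := by
  have hS := (hf.gradNormSq (m := 2) (by norm_num)).differentiable two_ne_zero
  have hU := (hf.lap (m := 1) (by norm_num)).differentiable one_ne_zero
  rw [funext (lap_eq_of_grad_eq_smul hqf hq (hf.of_le (by norm_num))),
    grad_mul (hq x) ((hS x).fun_add (hU x)), hqf, grad_add (hS x) (hU x),
    grad_gradNormSq (hf.of_le (by norm_num))]
  module

lemma lap_lap_eq_of_grad_eq_smul (hq : ContDiff ℝ 2 q) (hf : ContDiff ℝ 4 f) (x : Fin d → ℝ) :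
    lap (lap q) x = q x * ((gradNormSq f x + lap f x) ^ 2 +
      2 * (2 * (grad f x ⬝ᵥ (hess f x *ᵥ grad f x)) + grad f x ⬝ᵥ grad (lap f) x) +
      lap (gradNormSq f) x + lap (lap f) x) := by
  have hS : ContDiff ℝ 2 (gradNormSq f) := hf.gradNormSq (by norm_num)
  have hU : ContDiff ℝ 2 (lap f) := hf.lap (by norm_num)
  have hq1 := hq.differentiable two_ne_zero
  rw [funext (lap_eq_of_grad_eq_smul hqf hq1 (hf.of_le (by norm_num))),
    lap_mul hq (hS.add hU), lap_eq_of_grad_eq_smul hqf hq1 (hf.of_le (by norm_num)), hqf,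
    grad_add (hS.differentiable two_ne_zero x) (hU.differentiable two_ne_zero x),
    grad_gradNormSq (hf.of_le (by norm_num)), lap_add hS hU]
  simp only [gradNormSq, smul_dotProduct, dotProduct_add, dotProduct_smul, smul_eq_mul]
  ring

variable {g : (Fin d → ℝ) → ℝ}

lemma grad_eq_of_denoising (hq : Differentiable ℝ q) (hf : ContDiff ℝ 3 f) {x : Fin d → ℝ}
    (hx : q x ≠ 0)
    (heq : q x • grad g x = hess f x *ᵥ grad q x + lap q x • grad f x - grad (lap q) x) :
    grad g x = -(hess f x *ᵥ grad f x + grad (lap f) x) := by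
  apply smul_right_injective _ hx
  dsimp only
  rw [heq, hqf, grad_lap_eq_of_grad_eq_smul hqf hq hf,
    lap_eq_of_grad_eq_smul hqf hq (hf.of_le (by norm_num)), mulVec_smul]
  module

lemma lap_eq_of_denoising (hq : Differentiable ℝ q) (hf : ContDiff ℝ 4 f) (hq0 : ∀ x, q x ≠ 0)
    (heq : ∀ x, q x • grad g x = hess f x *ᵥ grad q x + lap q x • grad f x - grad (lap q) x)
    (x : Fin d → ℝ) :
    lap g x = -(lap (gradNormSq f) x / 2 + lap (lap f) x) := by
  have hS : ContDiff ℝ 2 (gradNormSq f) := hf.gradNormSq (by norm_num)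
  have hU : ContDiff ℝ 2 (lap f) := hf.lap (by norm_num)
  have hgrad : ∀ y, grad g y = grad (fun z => -(gradNormSq f z / 2 + lap f z)) y := by
    intro y
    rw [grad_eq_of_denoising hqf hq (hf.of_le (by norm_num)) (hq0 y) (heq y), grad_neg,
      grad_add ((hS.div_const (2 : ℝ)).differentiable two_ne_zero y)
        (hU.differentiable two_ne_zero y),
      grad_div_const (hS.differentiable two_ne_zero y), grad_gradNormSq (hf.of_le (by norm_num))]
    module
  rw [lap_congr hgrad, lap_neg, lap_add (hS.div_const (2 : ℝ)) hU, lap_div_const hS]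

end LogarithmicGradient

theorem effective_second_order_error_vanishes_general
    {d : ℕ} (q g : (Fin d → ℝ) → ℝ)
    (hqpos : ∀ y, 0 < q y) (hq : ContDiff ℝ 4 q)
    (f : (Fin d → ℝ) → ℝ) (hf : f = fun x => Real.log (q x))
    (heq : ∀ y, q y • grad g y =
      (hess f y).mulVec (grad q y) + lap q y • grad f y - grad (fun x => lap q x) y)
    (y : Fin d → ℝ) :
    lap (fun x => lap q x) y -
        ((∑ i, grad q y i * grad g y i) +
          ∑ i, ∑ j, hess q y i j * (grad f y i * grad f y j)) -
      2 * (∑ i, grad q y i * grad f y i) * lap f y -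
      q y * (lap g y + (lap f y) ^ 2 - ∑ i, ∑ j, hess f y i j * hess f y i j) -
      2 * (lap (fun x => lap q x) y -
        (∑ i, grad (fun x => lap q x) y i * grad f y i) - lap q y * lap f y) = 0 := by
  have hq0 : ∀ x, q x ≠ 0 := fun x => (hqpos x).ne'
  have hq1 : Differentiable ℝ q := hq.differentiable (by norm_num)
  have hf4 : ContDiff ℝ 4 f := hf ▸ hq.log hq0
  have hf3 : ContDiff ℝ 3 f := hf4.of_le (by norm_num)
  have hf2 : ContDiff ℝ 2 f := hf4.of_le (by norm_num)
  have hqf : ∀ x, grad q x = q x • grad f x := fun x => hf ▸ grad_eq_smul_grad_log (hq1 x) (hq0 x)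
  rw [lap_lap_eq_of_grad_eq_smul hqf (hq.of_le (by norm_num)) hf4,
    lap_eq_of_denoising hqf hq1 hf4 hq0 heq, lap_eq_of_grad_eq_smul hqf hq1 hf2,
    lap_gradNormSq hf3, sum_sum_mul_mul_eq_dotProduct_mulVec, hess_eq_of_grad_eq_smul hqf hq1 hf2,
    grad_lap_eq_of_grad_eq_smul hqf hq1 hf3, grad_eq_of_denoising hqf hq1 hf3 (hq0 y) (heq y), hqf]
  simp only [← dotProduct.eq_1, gradNormSq, smul_mulVec, add_mulVec, vecMulVec_mulVec,
    op_smul_eq_smul, smul_dotProduct, dotProduct_smul, add_dotProduct, dotProduct_add,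
    dotProduct_neg, smul_eq_mul]
  rw [dotProduct_comm (grad (lap f) y), dotProduct_comm (hess f y *ᵥ grad f y)]
  ring

/-- Vanishing of the effective second-order error term: for
`f = log q` and `g` solving `q ∇g = ∇²f ∇q + (Δq) ∇f - ∇Δq`, the effective
second-order Monge–Ampère residual vanishes identically. -/
theorem effective_second_order_error_vanishes
    {d : ℕ} (hd : 0 < d) (q g : (Fin d → ℝ) → ℝ)
    (hqpos : ∀ y, 0 < q y) (hq : ContDiff ℝ 4 q) (hg : ContDiff ℝ 1 g)
    (f : (Fin d → ℝ) → ℝ) (hf : f = fun x => Real.log (q x))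
    (heq : ∀ y, q y • grad g y =
      (hess f y).mulVec (grad q y) + lap q y • grad f y - grad (fun x => lap q x) y)
    (y : Fin d → ℝ) :
    lap (fun x => lap q x) y -
        ((∑ i, grad q y i * grad g y i) +
          ∑ i, ∑ j, hess q y i j * (grad f y i * grad f y j)) -
      2 * (∑ i, grad q y i * grad f y i) * lap f y -
      q y * (lap g y + (lap f y) ^ 2 - ∑ i, ∑ j, hess f y i j * hess f y i j) -
      2 * (lap (fun x => lap q x) y -
        (∑ i, grad (fun x => lap q x) y i * grad f y i) - lap q y * lap f y) = 0 :=
  effective_second_order_error_vanishes_general q g hqpos hq f hf heq y
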